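/- Let V be an 𝔽₂-vector space and i ≥ j ≥ 1 integers with i − j odd. Then: (a) Π_{i,j} and Π′_{i,j} are idempotent endomorphisms of Λ^i(V) ⊗ Λ^j(V) whose sum is the identity (in particular Π_{i,j} ∘ Π′_{i,j} = Π′_{i,j} ∘ Π_{i,j} = 0); (b) im Π_{i,j} = ker Π′_{i,j} = im θ_{i−1,j+1,1} = ker θ_{i,j,1}, and this subspace contains W_{(i,j)}(V); (c) im Π′_{i,j} = ker Π_{i,j} = im Dθ_{i,j,1} = ker Dθ_{i−1,j+1,1}. -/

import Mathlib

open scoped TensorProduct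

noncomputable section

abbrev F2 := ZMod 2

variable {V : Type*} [AddCommGroup V] [Module F2 V]

/-- The wedge `x₁ ∧ ⋯ ∧ xₙ` of a family of vectors, as an element of the `n`-th exterior
power `⋀[𝔽₂]^n V`. -/
def wedge (n : ℕ) (x : Fin n → V) : ⋀[F2]^n V :=
  ⟨ExteriorAlgebra.ιMulti F2 n x,
    ExteriorAlgebra.ιMulti_range F2 n (Set.mem_range_self x)⟩

/-- `IsTheta i j t θ` says that
`θ : Λ^i(V) ⊗ Λ^j(V) → Λ^a(V) ⊗ Λ^b(V)` (where `a = i + t` and `b = j − t`) is the map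
`θ_{i,j,t}` determined on decomposables by
`x ⊗ (b₁ ∧ ⋯ ∧ b_j) ↦ Σ_{|S| = t} (x ∧ b_S) ⊗ b_{Sᶜ}`,
the sum being over the `t`-element subsets `S` of `{1, …, j}` and `b_S` denoting the wedge
of the `b_s`, `s ∈ S`, in increasing order. -/
def IsTheta (i j t : ℕ) {a b : ℕ} (ha : i + t = a) (hb : j - t = b)
    (θ : (⋀[F2]^i V) ⊗[F2] (⋀[F2]^j V) →ₗ[F2] (⋀[F2]^a V) ⊗[F2] (⋀[F2]^b V)) : Prop :=
  ∀ (x : Fin i → V) (y : Fin j → V),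
    θ (wedge i x ⊗ₜ wedge j y) =
      ∑ S ∈ (Finset.powersetCard t (Finset.univ : Finset (Fin j))).attach,
        wedge a (Fin.append x
            (y ∘ (S.1.orderEmbOfFin (Finset.mem_powersetCard.mp S.2).2)) ∘ Fin.cast ha.symm)
          ⊗ₜ
        wedge b ((y ∘ ((S.1)ᶜ.orderEmbOfFin
            (by simp [Finset.card_compl, (Finset.mem_powersetCard.mp S.2).2]))) ∘
          Fin.cast hb.symm)

/-- `IsDTheta i j t Dθ` says that
`Dθ : Λ^a(V) ⊗ Λ^b(V) → Λ^i(V) ⊗ Λ^j(V)` (where `a = i + t` and `j = b + t`) is the dual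
map `Dθ_{i,j,t}` determined on decomposables by
`(a₁ ∧ ⋯ ∧ a_{i+t}) ⊗ y ↦ Σ_{|S| = t} a_{Sᶜ} ⊗ (y ∧ a_S)`. -/
def IsDTheta (i j t : ℕ) {a b : ℕ} (ha : i + t = a) (hb : b + t = j)
    (Dθ : (⋀[F2]^a V) ⊗[F2] (⋀[F2]^b V) →ₗ[F2] (⋀[F2]^i V) ⊗[F2] (⋀[F2]^j V)) : Prop :=
  ∀ (x : Fin a → V) (y : Fin b → V),
    Dθ (wedge a x ⊗ₜ wedge b y) =
      ∑ S ∈ (Finset.powersetCard t (Finset.univ : Finset (Fin a))).attach,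
        wedge i ((x ∘ ((S.1)ᶜ.orderEmbOfFin
            (by simp [Finset.card_compl, (Finset.mem_powersetCard.mp S.2).2]))) ∘
          Fin.cast (by omega : i = a - t))
          ⊗ₜ
        wedge j (Fin.append y
            (x ∘ (S.1.orderEmbOfFin (Finset.mem_powersetCard.mp S.2).2)) ∘ Fin.cast hb.symm)

/-!
On a decomposable tensor `x₁ ∧ ⋯ ∧ x_i ⊗ y₁ ∧ ⋯ ∧ y_j`, both `Π` and `Π′` return the sum of the
`i j` tensors obtained by exchanging one `x_s` with one `y_r`, plus the tensor itself `i` times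
(for `Π`) or `j` times (for `Π′`); over `𝔽₂` wedges are symmetric, so no signs appear. Hence
`Π + Π′` is multiplication by `i + j`, which is odd. The composites `θ_{i,j,1} ∘ θ_{i−1,j+1,1}`
and `Dθ_{i−1,j+1,1} ∘ Dθ_{i,j,1}` vanish: their terms are indexed by ordered pairs of distinct
positions and cancel in pairs when the pair is swapped. All remaining claims are linear algebra
of maps with `A B + D C = 1`, `C A = 0` and `B D = 0`.
-/

namespace LinearMap

variable {R M N N' : Type*} [Semiring R] [AddCommMonoid M] [AddCommMonoid N]
  [AddCommMonoid N'] [Module R M] [Module R N] [Module R N']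
  {A : N →ₗ[R] M} {B : M →ₗ[R] N} {C : M →ₗ[R] N'} {D : N' →ₗ[R] M}

theorem comp_comp_eq_zero (hBD : B ∘ₗ D = 0) : (A ∘ₗ B) ∘ₗ (D ∘ₗ C) = 0 := by
  rw [comp_assoc, ← comp_assoc C D B, hBD, zero_comp, comp_zero]

theorem comp_idempotent_of_add_eq_id (hid : A ∘ₗ B + D ∘ₗ C = id) (hBD : B ∘ₗ D = 0) :
    (A ∘ₗ B) ∘ₗ (A ∘ₗ B) = A ∘ₗ B := by
  conv_rhs => rw [← comp_id (A ∘ₗ B), ← hid, comp_add, comp_comp_eq_zero hBD, add_zero]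

theorem range_comp_eq_ker_comp_of_add_eq_id (hid : A ∘ₗ B + D ∘ₗ C = id) (hCA : C ∘ₗ A = 0) :
    range (A ∘ₗ B) = ker (D ∘ₗ C) ∧ ker (D ∘ₗ C) = range A ∧ range A = ker C := by
  have hker : ker (D ∘ₗ C) ≤ range (A ∘ₗ B) := fun v hv =>
    ⟨v, by simpa [mem_ker.mp hv] using LinearMap.congr_fun hid v⟩
  have h₁ : range (A ∘ₗ B) ≤ range A := range_comp_le_range B A
  have h₂ : range A ≤ ker C := range_le_ker_iff.mpr hCA
  have h₃ : ker C ≤ ker (D ∘ₗ C) := ker_le_ker_comp C D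
  exact ⟨le_antisymm (h₁.trans (h₂.trans h₃)) hker,
    le_antisymm (hker.trans h₁) (h₂.trans h₃), le_antisymm h₂ (h₃.trans (hker.trans h₁))⟩

end LinearMap

theorem ZModModule.odd_nsmul {G : Type*} [AddCommGroup G] [Module (ZMod 2) G] {p : ℕ}
    (hp : Odd p) (v : G) : p • v = v := by
  rw [← Nat.cast_smul_eq_nsmul (ZMod 2), hp.natCast_zmod_two, one_smul]

theorem Finset.sum_attach_powersetCard_one {α M : Type*} [Fintype α] [DecidableEq α]
    [AddCommMonoid M] (f : {S // S ∈ powersetCard 1 (univ : Finset α)} → M) :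
    ∑ S ∈ (powersetCard 1 univ).attach, f S = ∑ s, f ⟨{s}, by simp⟩ := by
  refine (sum_bij (fun s _ => ⟨{s}, by simp⟩) (fun _ _ => mem_attach _ _)
    (fun _ _ _ _ h => singleton_injective (congrArg Subtype.val h)) (fun S _ => ?_)
    fun _ _ => rfl).symm
  obtain ⟨s, hs⟩ := card_eq_one.mp (mem_powersetCard.mp S.2).2
  exact ⟨s, mem_univ s, Subtype.ext hs.symm⟩

-- `(s, r) ↦ (s.succAbove r, r.predAbove s)` lists the same two positions of `Fin (n + 2)` in the
-- opposite order, so it is an involution without fixed points.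
theorem ZModModule.sum_sum_eq_zero_of_swap {G : Type*} [AddCommGroup G] [Module (ZMod 2) G]
    {n : ℕ} (f : Fin (n + 2) → Fin (n + 1) → G)
    (hf : ∀ s r, f (s.succAbove r) (r.predAbove s) = f s r) : ∑ s, ∑ r, f s r = 0 := by
  rw [← Finset.sum_product']
  refine Finset.sum_ninvolution (fun p => (p.1.succAbove p.2, p.2.predAbove p.1))
    (fun p => by rw [hf, ZModModule.add_self]) (fun p _ h => Fin.succAbove_ne p.1 p.2 ?_)
    (fun _ => Finset.mem_univ _) fun p => ?_
  · exact congrArg Prod.fst h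
  · exact Prod.ext (Fin.succAbove_succAbove_predAbove p.1 p.2)
      (Fin.predAbove_predAbove_succAbove p.1 p.2)

theorem Fin.removeNth_castSucc_snoc {α : Type*} {n : ℕ} (y : Fin (n + 1) → α) (a : α)
    (r : Fin (n + 1)) :
    r.castSucc.removeNth (Fin.snoc y a : Fin (n + 2) → α) = Fin.snoc (r.removeNth y) a := by
  ext k
  induction k using Fin.lastCases with
  | last =>
    rw [Fin.removeNth_apply, Fin.succAbove_castSucc_of_le _ _ (Fin.le_last r)]
    simp
  | cast k => simp [Fin.removeNth_apply, Fin.castSucc_succAbove_castSucc]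

theorem wedge_eq_ιMulti (n : ℕ) :
    (wedge n : (Fin n → V) → ⋀[F2]^n V) = exteriorPower.ιMulti F2 n :=
  rfl

theorem wedge_comp_perm {n : ℕ} (x : Fin n → V) (σ : Equiv.Perm (Fin n)) :
    wedge n (x ∘ σ) = wedge n x := by
  rw [wedge_eq_ιMulti, AlternatingMap.map_perm]
  rcases Int.units_eq_one_or (Equiv.Perm.sign σ) with h | h <;> rw [h]
  · exact one_smul _ _
  · rw [Units.neg_smul, one_smul, ZModModule.neg_eq_self]

theorem wedge_insertNth {n : ℕ} (p : Fin (n + 1)) (a : V) (v : Fin n → V) :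
    wedge (n + 1) (p.insertNth a v) = wedge (n + 1) (Fin.cons a v) := by
  rw [← Fin.cons_comp_cycleRange, wedge_comp_perm]

theorem wedge_snoc_removeNth {n : ℕ} (x : Fin (n + 1) → V) (s : Fin (n + 1)) :
    wedge (n + 1) (Fin.snoc (s.removeNth x) (x s)) = wedge (n + 1) x := by
  conv_rhs => rw [← Fin.insertNth_self_removeNth s x]
  rw [← Fin.insertNth_last', wedge_insertNth, wedge_insertNth]

theorem wedge_snoc_snoc_comm {n : ℕ} (x : Fin n → V) (a b : V) :
    wedge (n + 2) (Fin.snoc (Fin.snoc x a) b) = wedge (n + 2) (Fin.snoc (Fin.snoc x b) a) := by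
  rw [← wedge_comp_perm _ (Equiv.swap (Fin.last (n + 1)) (Fin.last n).castSucc)]
  congr 1
  ext k
  induction k using Fin.lastCases with
  | last => simp
  | cast k =>
    induction k using Fin.lastCases with
    | last => simp
    | cast k =>
      rw [Function.comp_apply, Equiv.swap_apply_of_ne_of_ne (Fin.castSucc_ne_last _)
        (Fin.castSucc_injective _ |>.ne (Fin.castSucc_ne_last k)), Fin.snoc_castSucc,
        Fin.snoc_castSucc, Fin.snoc_castSucc, Fin.snoc_castSucc]

theorem tensor_wedge_ext {m n : ℕ} {M : Type*} [AddCommGroup M] [Module F2 M]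
    {f g : (⋀[F2]^m V) ⊗[F2] (⋀[F2]^n V) →ₗ[F2] M}
    (h : ∀ x y, f (wedge m x ⊗ₜ wedge n y) = g (wedge m x ⊗ₜ wedge n y)) : f = g :=
  TensorProduct.ext <| exteriorPower.linearMap_ext <| AlternatingMap.ext fun x =>
    exteriorPower.linearMap_ext <| AlternatingMap.ext fun y => h x y

theorem IsTheta.one_apply_wedge_tmul {i b : ℕ}
    {θ : (⋀[F2]^i V) ⊗[F2] (⋀[F2]^(b + 1) V) →ₗ[F2] (⋀[F2]^(i + 1) V) ⊗[F2] (⋀[F2]^b V)}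
    (hθ : IsTheta i (b + 1) 1 rfl rfl θ) (x : Fin i → V) (y : Fin (b + 1) → V) :
    θ (wedge i x ⊗ₜ wedge (b + 1) y) =
      ∑ s, wedge (i + 1) (Fin.snoc x (y s)) ⊗ₜ wedge b (s.removeNth y) := by
  rw [hθ x y, Finset.sum_attach_powersetCard_one]
  simp only [Fin.append_right_eq_snoc, Function.comp_apply, Finset.orderEmbOfFin_singleton,
    Finset.orderEmbOfFin_compl_singleton_eq_succAboveOrderEmb, Fin.cast_refl, CompTriple.comp_eq]
  rfl

theorem IsDTheta.one_apply_wedge_tmul {i b : ℕ}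
    {Dθ : (⋀[F2]^(i + 1) V) ⊗[F2] (⋀[F2]^b V) →ₗ[F2] (⋀[F2]^i V) ⊗[F2] (⋀[F2]^(b + 1) V)}
    (hDθ : IsDTheta i (b + 1) 1 rfl rfl Dθ) (x : Fin (i + 1) → V) (y : Fin b → V) :
    Dθ (wedge (i + 1) x ⊗ₜ wedge b y) =
      ∑ s, wedge i (s.removeNth x) ⊗ₜ wedge (b + 1) (Fin.snoc y (x s)) := by
  rw [hDθ x y, Finset.sum_attach_powersetCard_one]
  simp only [Fin.append_right_eq_snoc, Function.comp_apply, Finset.orderEmbOfFin_singleton,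
    Finset.orderEmbOfFin_compl_singleton_eq_succAboveOrderEmb, Fin.cast_refl, CompTriple.comp_eq]
  rfl

theorem theta_comp_theta_apply_wedge_tmul {m n : ℕ}
    {θ : (⋀[F2]^m V) ⊗[F2] (⋀[F2]^(n + 2) V) →ₗ[F2] (⋀[F2]^(m + 1) V) ⊗[F2] (⋀[F2]^(n + 1) V)}
    (hθ : IsTheta m (n + 2) 1 rfl rfl θ)
    {θ' : (⋀[F2]^(m + 1) V) ⊗[F2] (⋀[F2]^(n + 1) V) →ₗ[F2] (⋀[F2]^(m + 2) V) ⊗[F2] (⋀[F2]^n V)}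
    (hθ' : IsTheta (m + 1) (n + 1) 1 rfl rfl θ') (x : Fin m → V) (y : Fin (n + 2) → V) :
    θ' (θ (wedge m x ⊗ₜ wedge (n + 2) y)) = 0 := by
  simp only [hθ.one_apply_wedge_tmul, map_sum, hθ'.one_apply_wedge_tmul]
  refine ZModModule.sum_sum_eq_zero_of_swap _ fun s r => ?_
  simp only [Fin.removeNth_apply, Fin.succAbove_succAbove_predAbove,
    ← Fin.removeNth_removeNth_eq_swap, wedge_snoc_snoc_comm]

theorem dTheta_comp_dTheta_apply_wedge_tmul {m n : ℕ}
    {Dθ : (⋀[F2]^(m + 1) V) ⊗[F2] (⋀[F2]^(n + 1) V) →ₗ[F2] (⋀[F2]^m V) ⊗[F2] (⋀[F2]^(n + 2) V)}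
    (hDθ : IsDTheta m (n + 2) 1 rfl rfl Dθ)
    {Dθ' : (⋀[F2]^(m + 2) V) ⊗[F2] (⋀[F2]^n V) →ₗ[F2] (⋀[F2]^(m + 1) V) ⊗[F2] (⋀[F2]^(n + 1) V)}
    (hDθ' : IsDTheta (m + 1) (n + 1) 1 rfl rfl Dθ') (x : Fin (m + 2) → V) (y : Fin n → V) :
    Dθ (Dθ' (wedge (m + 2) x ⊗ₜ wedge n y)) = 0 := by
  simp only [hDθ'.one_apply_wedge_tmul, map_sum, hDθ.one_apply_wedge_tmul]
  refine ZModModule.sum_sum_eq_zero_of_swap _ fun s r => ?_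
  simp only [Fin.removeNth_apply, Fin.succAbove_succAbove_predAbove,
    ← Fin.removeNth_removeNth_eq_swap, wedge_snoc_snoc_comm]

theorem IsTheta.one_apply_wedge_tmul_snoc {i b : ℕ}
    {θ : (⋀[F2]^i V) ⊗[F2] (⋀[F2]^(b + 2) V) →ₗ[F2] (⋀[F2]^(i + 1) V) ⊗[F2] (⋀[F2]^(b + 1) V)}
    (hθ : IsTheta i (b + 2) 1 rfl rfl θ) (x : Fin i → V) (y : Fin (b + 1) → V) (a : V) :
    θ (wedge i x ⊗ₜ wedge (b + 2) (Fin.snoc y a)) =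
      ∑ r, wedge (i + 1) (Fin.snoc x (y r)) ⊗ₜ wedge (b + 1) (Fin.snoc (r.removeNth y) a) +
        wedge (i + 1) (Fin.snoc x a) ⊗ₜ wedge (b + 1) y := by
  simp only [hθ.one_apply_wedge_tmul, Fin.sum_univ_castSucc, Fin.snoc_castSucc,
    Fin.removeNth_castSucc_snoc, Fin.snoc_last, Fin.removeNth_last, Fin.init_snoc]

theorem IsDTheta.one_apply_wedge_tmul_snoc {i b : ℕ}
    {Dθ : (⋀[F2]^(i + 2) V) ⊗[F2] (⋀[F2]^b V) →ₗ[F2] (⋀[F2]^(i + 1) V) ⊗[F2] (⋀[F2]^(b + 1) V)}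
    (hDθ : IsDTheta (i + 1) (b + 1) 1 rfl rfl Dθ) (x : Fin (i + 1) → V) (a : V) (y : Fin b → V) :
    Dθ (wedge (i + 2) (Fin.snoc x a) ⊗ₜ wedge b y) =
      ∑ s, wedge (i + 1) (Fin.snoc (s.removeNth x) a) ⊗ₜ wedge (b + 1) (Fin.snoc y (x s)) +
        wedge (i + 1) x ⊗ₜ wedge (b + 1) (Fin.snoc y a) := by
  simp only [hDθ.one_apply_wedge_tmul, Fin.sum_univ_castSucc, Fin.snoc_castSucc,
    Fin.removeNth_castSucc_snoc, Fin.snoc_last, Fin.removeNth_last, Fin.init_snoc]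

theorem theta_comp_dTheta_apply_wedge_tmul {m n : ℕ}
    {θ : (⋀[F2]^m V) ⊗[F2] (⋀[F2]^(n + 2) V) →ₗ[F2] (⋀[F2]^(m + 1) V) ⊗[F2] (⋀[F2]^(n + 1) V)}
    (hθ : IsTheta m (n + 2) 1 rfl rfl θ)
    {Dθ : (⋀[F2]^(m + 1) V) ⊗[F2] (⋀[F2]^(n + 1) V) →ₗ[F2] (⋀[F2]^m V) ⊗[F2] (⋀[F2]^(n + 2) V)}
    (hDθ : IsDTheta m (n + 2) 1 rfl rfl Dθ) (x : Fin (m + 1) → V) (y : Fin (n + 1) → V) :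
    θ (Dθ (wedge (m + 1) x ⊗ₜ wedge (n + 1) y)) =
      ∑ s, ∑ r, wedge (m + 1) (Fin.snoc (s.removeNth x) (y r)) ⊗ₜ
          wedge (n + 1) (Fin.snoc (r.removeNth y) (x s)) +
        (m + 1) • (wedge (m + 1) x ⊗ₜ wedge (n + 1) y) := by
  simp only [hDθ.one_apply_wedge_tmul, map_sum, hθ.one_apply_wedge_tmul_snoc,
    wedge_snoc_removeNth, Finset.sum_add_distrib, Finset.sum_const, Finset.card_univ,
    Fintype.card_fin]

theorem dTheta_comp_theta_apply_wedge_tmul {m n : ℕ}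
    {θ : (⋀[F2]^(m + 1) V) ⊗[F2] (⋀[F2]^(n + 1) V) →ₗ[F2] (⋀[F2]^(m + 2) V) ⊗[F2] (⋀[F2]^n V)}
    (hθ : IsTheta (m + 1) (n + 1) 1 rfl rfl θ)
    {Dθ : (⋀[F2]^(m + 2) V) ⊗[F2] (⋀[F2]^n V) →ₗ[F2] (⋀[F2]^(m + 1) V) ⊗[F2] (⋀[F2]^(n + 1) V)}
    (hDθ : IsDTheta (m + 1) (n + 1) 1 rfl rfl Dθ) (x : Fin (m + 1) → V) (y : Fin (n + 1) → V) :
    Dθ (θ (wedge (m + 1) x ⊗ₜ wedge (n + 1) y)) =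
      ∑ r, ∑ s, wedge (m + 1) (Fin.snoc (s.removeNth x) (y r)) ⊗ₜ
          wedge (n + 1) (Fin.snoc (r.removeNth y) (x s)) +
        (n + 1) • (wedge (m + 1) x ⊗ₜ wedge (n + 1) y) := by
  simp only [hθ.one_apply_wedge_tmul, map_sum, hDθ.one_apply_wedge_tmul_snoc,
    wedge_snoc_removeNth, Finset.sum_add_distrib, Finset.sum_const, Finset.card_univ,
    Fintype.card_fin]

theorem theta_comp_dTheta_add_dTheta_comp_theta_apply_wedge_tmul {m n : ℕ}
    (hodd : Odd (m + n))
    {θ : (⋀[F2]^m V) ⊗[F2] (⋀[F2]^(n + 2) V) →ₗ[F2] (⋀[F2]^(m + 1) V) ⊗[F2] (⋀[F2]^(n + 1) V)}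
    (hθ : IsTheta m (n + 2) 1 rfl rfl θ)
    {Dθ : (⋀[F2]^(m + 1) V) ⊗[F2] (⋀[F2]^(n + 1) V) →ₗ[F2] (⋀[F2]^m V) ⊗[F2] (⋀[F2]^(n + 2) V)}
    (hDθ : IsDTheta m (n + 2) 1 rfl rfl Dθ)
    {θ' : (⋀[F2]^(m + 1) V) ⊗[F2] (⋀[F2]^(n + 1) V) →ₗ[F2] (⋀[F2]^(m + 2) V) ⊗[F2] (⋀[F2]^n V)}
    (hθ' : IsTheta (m + 1) (n + 1) 1 rfl rfl θ')
    {Dθ' : (⋀[F2]^(m + 2) V) ⊗[F2] (⋀[F2]^n V) →ₗ[F2] (⋀[F2]^(m + 1) V) ⊗[F2] (⋀[F2]^(n + 1) V)}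
    (hDθ' : IsDTheta (m + 1) (n + 1) 1 rfl rfl Dθ') (x : Fin (m + 1) → V) (y : Fin (n + 1) → V) :
    θ (Dθ (wedge (m + 1) x ⊗ₜ wedge (n + 1) y)) + Dθ' (θ' (wedge (m + 1) x ⊗ₜ wedge (n + 1) y)) =
      wedge (m + 1) x ⊗ₜ wedge (n + 1) y := by
  rw [theta_comp_dTheta_apply_wedge_tmul hθ hDθ, dTheta_comp_theta_apply_wedge_tmul hθ' hDθ',
    Finset.sum_comm, add_add_add_comm, ZModModule.add_self, zero_add, ← add_nsmul]
  exact ZModModule.odd_nsmul (by rw [add_add_add_comm]; exact hodd.add_even even_two) _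

/-- For `i ≥ j ≥ 1` with `i − j` odd: the maps
`Π = θ_{i−1,j+1,1} ∘ Dθ_{i−1,j+1,1}` and `Π′ = Dθ_{i,j,1} ∘ θ_{i,j,1}` are idempotent with
sum the identity (so `Π ∘ Π′ = Π′ ∘ Π = 0`);
`im Π = ker Π′ = im θ_{i−1,j+1,1} = ker θ_{i,j,1}` and this subspace contains
`W_{(i,j)}(V) = ⋂_{1 ≤ t ≤ j} ker θ_{i,j,t}`; and
`im Π′ = ker Π = im Dθ_{i,j,1} = ker Dθ_{i−1,j+1,1}`. -/
theorem pi_projectors {V : Type*} [AddCommGroup V] [Module F2 V]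
    (i j : ℕ) (hj : 1 ≤ j) (hij : j ≤ i) (hodd : Odd (i - j))
    (θ₁ : (⋀[F2]^(i - 1) V) ⊗[F2] (⋀[F2]^(j + 1) V) →ₗ[F2] (⋀[F2]^i V) ⊗[F2] (⋀[F2]^j V))
    (hθ₁ : IsTheta (i - 1) (j + 1) 1 (by omega) (by omega) θ₁)
    (Dθ₁ : (⋀[F2]^i V) ⊗[F2] (⋀[F2]^j V) →ₗ[F2] (⋀[F2]^(i - 1) V) ⊗[F2] (⋀[F2]^(j + 1) V))
    (hDθ₁ : IsDTheta (i - 1) (j + 1) 1 (by omega) (by omega) Dθ₁)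
    (Θ : ∀ t : ℕ, (⋀[F2]^i V) ⊗[F2] (⋀[F2]^j V) →ₗ[F2]
      (⋀[F2]^(i + t) V) ⊗[F2] (⋀[F2]^(j - t) V))
    (hΘ : ∀ t : ℕ, t ≤ j → IsTheta i j t rfl rfl (Θ t))
    (Dθ₂ : (⋀[F2]^(i + 1) V) ⊗[F2] (⋀[F2]^(j - 1) V) →ₗ[F2] (⋀[F2]^i V) ⊗[F2] (⋀[F2]^j V))
    (hDθ₂ : IsDTheta i j 1 rfl (by omega) Dθ₂) :
    ((θ₁ ∘ₗ Dθ₁) ∘ₗ (θ₁ ∘ₗ Dθ₁) = θ₁ ∘ₗ Dθ₁ ∧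
     (Dθ₂ ∘ₗ Θ 1) ∘ₗ (Dθ₂ ∘ₗ Θ 1) = Dθ₂ ∘ₗ Θ 1 ∧
     θ₁ ∘ₗ Dθ₁ + Dθ₂ ∘ₗ Θ 1 = LinearMap.id ∧
     (θ₁ ∘ₗ Dθ₁) ∘ₗ (Dθ₂ ∘ₗ Θ 1) = 0 ∧ (Dθ₂ ∘ₗ Θ 1) ∘ₗ (θ₁ ∘ₗ Dθ₁) = 0) ∧
    (LinearMap.range (θ₁ ∘ₗ Dθ₁) = LinearMap.ker (Dθ₂ ∘ₗ Θ 1) ∧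
     LinearMap.ker (Dθ₂ ∘ₗ Θ 1) = LinearMap.range θ₁ ∧
     LinearMap.range θ₁ = LinearMap.ker (Θ 1) ∧
     (⨅ t ∈ Finset.Icc 1 j, LinearMap.ker (Θ t)) ≤ LinearMap.range (θ₁ ∘ₗ Dθ₁)) ∧
    (LinearMap.range (Dθ₂ ∘ₗ Θ 1) = LinearMap.ker (θ₁ ∘ₗ Dθ₁) ∧
     LinearMap.ker (θ₁ ∘ₗ Dθ₁) = LinearMap.range Dθ₂ ∧
     LinearMap.range Dθ₂ = LinearMap.ker Dθ₁) := by
  obtain ⟨m, rfl⟩ : ∃ m, i = m + 1 := ⟨i - 1, by omega⟩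
  obtain ⟨n, rfl⟩ : ∃ n, j = n + 1 := ⟨j - 1, by omega⟩
  have hodd' : Odd (m + n) := by rw [Nat.odd_iff] at hodd ⊢; omega
  have hΘ₁ : IsTheta (m + 1) (n + 1) 1 rfl rfl (Θ 1) := hΘ 1 hj
  have hid : θ₁ ∘ₗ Dθ₁ + Dθ₂ ∘ₗ Θ 1 = LinearMap.id := tensor_wedge_ext fun x y =>
    theta_comp_dTheta_add_dTheta_comp_theta_apply_wedge_tmul hodd' hθ₁ hDθ₁ hΘ₁ hDθ₂ x y
  have hid' : Dθ₂ ∘ₗ Θ 1 + θ₁ ∘ₗ Dθ₁ = LinearMap.id := (add_comm _ _).trans hid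
  have hΘθ : Θ 1 ∘ₗ θ₁ = 0 := tensor_wedge_ext fun x y =>
    theta_comp_theta_apply_wedge_tmul hθ₁ hΘ₁ x y
  have hDθDθ : Dθ₁ ∘ₗ Dθ₂ = 0 := tensor_wedge_ext fun x y =>
    dTheta_comp_dTheta_apply_wedge_tmul hDθ₁ hDθ₂ x y
  obtain ⟨hP₁, hP₂, hP₃⟩ := LinearMap.range_comp_eq_ker_comp_of_add_eq_id hid hΘθ
  obtain ⟨hQ₁, hQ₂, hQ₃⟩ := LinearMap.range_comp_eq_ker_comp_of_add_eq_id hid' hDθDθ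
  have hW : (⨅ t ∈ Finset.Icc 1 (n + 1), LinearMap.ker (Θ t)) ≤ LinearMap.ker (Θ 1) :=
    biInf_le _ (Finset.mem_Icc.mpr ⟨le_rfl, hj⟩)
  exact ⟨⟨LinearMap.comp_idempotent_of_add_eq_id hid hDθDθ,
      LinearMap.comp_idempotent_of_add_eq_id hid' hΘθ, hid,
      LinearMap.comp_comp_eq_zero hDθDθ, LinearMap.comp_comp_eq_zero hΘθ⟩,
    ⟨hP₁, hP₂, hP₃, hW.trans (hP₁.trans (hP₂.trans hP₃)).ge⟩, ⟨hQ₁, hQ₂, hQ₃⟩⟩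

end
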